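/- Let K be a measure on ℝ^d with K({0}) = 0 and ∫ |x|² K(dx) < ∞, and let = [[A, b],[bᵀ, c]] ∈ ℝ^{(d+1)×(d+1)} be symmetric positive semidefinite with A_{ij} = ∫ x_i x_j K(dx) for all i, j ≤ d. Then there exists a measure K̂ on ℝ^{d+1} with K̂({0}) = 0 and ∫ |x̂|² K̂(dx̂) < ∞ such that: (a) for every nonnegative measurable f̂ : ℝ^{d+1} → ℝ₊, ∫ f̂(x̂) K̂(dx̂) = ∫ f̂(x, ⟨A†b, x⟩) K(dx); (b) for every nonnegative measurable f : ℝ^d → ℝ₊, ∫ f(x) K(dx) = ∫_{ℝ^{d+1}} f(x) K̂(dx̂) where x denotes the first d coordinates of x̂; and (c) Â_{i,j} = ∫ x̂_i x̂_j K̂(dx̂) for all i, j ∈ {1,...,d+1} with i ≤ d or j ≤ d. -/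

import Mathlib

/-!
Take `K̂` to be the pushforward of `K` under `x ↦ (x, ⟨w, x⟩)` with `w = A†b`. Everything except
the mixed moments is then immediate (finite second moments by Cauchy–Schwarz), and
`∫ xᵢ ⟨w, x⟩ dK = (A w)ᵢ`, so it remains to see `A A† b = b`. If `A v = 0`, then `(v, 0)` is a null
vector of the positive semidefinite `Â`, hence in its kernel, and the last entry of `Â (v, 0)` is
`⟨b, v⟩`; so `b ⊥ ker A`. For symmetric `A` the Penrose equations make `I - A A†` a symmetric map
into `ker A`, which therefore kills `b`. The pseudoinverse exists since `A = U D Uᵀ` and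
`U D⁻¹ Uᵀ` (with `0⁻¹ = 0`) satisfies the Penrose equations.
-/

open Matrix MeasureTheory
open scoped ENNReal

/-- `B` is the Moore-Penrose pseudoinverse of `A` (Penrose characterization). -/
def IsMoorePenroseInverse {d m : ℕ} (A : Matrix (Fin d) (Fin m) ℝ)
    (B : Matrix (Fin m) (Fin d) ℝ) : Prop :=
  A * B * A = A ∧ B * A * B = B ∧ (A * B)ᵀ = A * B ∧ (B * A)ᵀ = B * A

open Classical in
/-- The Moore-Penrose pseudoinverse `A†` of a real matrix. -/
noncomputable def moorePenrose {d m : ℕ} (A : Matrix (Fin d) (Fin m) ℝ) :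
    Matrix (Fin m) (Fin d) ℝ :=
  if h : ∃ B, IsMoorePenroseInverse A B then h.choose else 0

/-- The symmetric block matrix `Â = [[A, b], [bᵀ, c]]`. -/
def hatMatrix {d : ℕ} (A : Matrix (Fin d) (Fin d) ℝ) (b : Fin d → ℝ) (c : ℝ) :
    Matrix (Fin d ⊕ Unit) (Fin d ⊕ Unit) ℝ :=
  Matrix.fromBlocks A (Matrix.of fun i _ => b i) (Matrix.of fun _ j => b j)
    (Matrix.of fun _ _ => c)

theorem isMoorePenroseInverse_diagonal {d : ℕ} (lam : Fin d → ℝ) :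
    IsMoorePenroseInverse (diagonal lam) (diagonal lam⁻¹) := by
  refine ⟨?_, ?_, ?_, ?_⟩ <;> simp only [diagonal_mul_diagonal, diagonal_transpose]
  · congr 1; funext i; exact mul_inv_mul_cancel (lam i)
  · congr 1; funext i; simpa using mul_inv_mul_cancel (lam i)⁻¹

theorem IsMoorePenroseInverse.conj {d : ℕ} {A B U : Matrix (Fin d) (Fin d) ℝ}
    (h : IsMoorePenroseInverse A B) (hU : Uᵀ * U = 1) :
    IsMoorePenroseInverse (U * A * Uᵀ) (U * B * Uᵀ) := by
  have cancel : ∀ M N : Matrix (Fin d) (Fin d) ℝ, U * M * Uᵀ * (U * N * Uᵀ) = U * (M * N) * Uᵀ :=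
    fun M N => by simp only [Matrix.mul_assoc, ← Matrix.mul_assoc Uᵀ U, hU, Matrix.one_mul]
  obtain ⟨h₁, h₂, h₃, h₄⟩ := h
  refine ⟨?_, ?_, ?_, ?_⟩
  · rw [cancel, cancel, h₁]
  · rw [cancel, cancel, h₂]
  · rw [cancel, transpose_mul, transpose_mul, transpose_transpose, h₃]
    simp only [Matrix.mul_assoc]
  · rw [cancel, transpose_mul, transpose_mul, transpose_transpose, h₄]
    simp only [Matrix.mul_assoc]

theorem Matrix.IsSymm.exists_isMoorePenroseInverse {d : ℕ} {A : Matrix (Fin d) (Fin d) ℝ}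
    (hA : A.IsSymm) : ∃ B, IsMoorePenroseInverse A B := by
  have hH : A.IsHermitian := isHermitian_iff_isSymm.2 hA
  set U : Matrix (Fin d) (Fin d) ℝ := (hH.eigenvectorUnitary : Matrix (Fin d) (Fin d) ℝ)
  have hU : Uᵀ * U = 1 := by
    rw [← conjTranspose_eq_transpose_of_trivial, ← star_eq_conjTranspose]
    exact Unitary.coe_star_mul_self _
  have hAU : A = U * diagonal hH.eigenvalues * Uᵀ := by
    rw [← conjTranspose_eq_transpose_of_trivial, ← star_eq_conjTranspose]
    simpa using hH.spectral_theorem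
  rw [hAU]
  exact ⟨_, (isMoorePenroseInverse_diagonal _).conj hU⟩

theorem Matrix.IsSymm.isMoorePenroseInverse_moorePenrose {d : ℕ}
    {A : Matrix (Fin d) (Fin d) ℝ} (hA : A.IsSymm) :
    IsMoorePenroseInverse A (moorePenrose A) := by
  rw [moorePenrose, dif_pos hA.exists_isMoorePenroseInverse]
  exact hA.exists_isMoorePenroseInverse.choose_spec

theorem IsMoorePenroseInverse.mulVec_mulVec_of_dotProduct_ker_eq_zero {d : ℕ}
    {A B : Matrix (Fin d) (Fin d) ℝ} (h : IsMoorePenroseInverse A B) (hA : A.IsSymm)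
    {b : Fin d → ℝ} (hb : ∀ v, A *ᵥ v = 0 → b ⬝ᵥ v = 0) : A *ᵥ (B *ᵥ b) = b := by
  set P := A * B
  have hAP : A * P = A := by
    have := congrArg transpose h.1
    rwa [transpose_mul, h.2.2.1, hA.eq] at this
  have hperp : ∀ v, (b - P *ᵥ b) ⬝ᵥ v = 0 := fun v => by
    have hker : A *ᵥ (v - P *ᵥ v) = 0 := by
      rw [mulVec_sub, mulVec_mulVec, hAP, sub_self]
    rw [sub_dotProduct, ← vecMul_transpose, ← dotProduct_mulVec, h.2.2.1, ← dotProduct_sub,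
      hb _ hker]
  rw [mulVec_mulVec, eq_comm, ← sub_eq_zero, ← dotProduct_self_eq_zero]
  exact hperp _

theorem dotProduct_eq_zero_of_posSemidef_hatMatrix {d : ℕ} {A : Matrix (Fin d) (Fin d) ℝ}
    {b : Fin d → ℝ} {c : ℝ} (hhat : (hatMatrix A b c).PosSemidef) {v : Fin d → ℝ}
    (hv : A *ᵥ v = 0) : b ⬝ᵥ v = 0 := by
  have hmul : hatMatrix A b c *ᵥ Sum.elim v 0 = Sum.elim (0 : Fin d → ℝ) fun _ => b ⬝ᵥ v := by
    rw [hatMatrix, fromBlocks_mulVec]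
    ext (i | i) <;> simp [hv, mulVec, dotProduct]
  have := (hhat.dotProduct_mulVec_zero_iff (Sum.elim v 0)).1 (by simp [hmul])
  simpa [hmul] using congrFun this (Sum.inr ())

section SecondMoments

variable {ι : Type*} [Fintype ι]

def appendDot (w x : ι → ℝ) : ι ⊕ Unit → ℝ := Sum.elim x fun _ => w ⬝ᵥ x

theorem measurable_appendDot (w : ι → ℝ) : Measurable (appendDot w) := by
  refine measurable_pi_iff.2 fun k => ?_
  cases k with
  | inl i => exact measurable_pi_apply i
  | inr => simp only [appendDot, Sum.elim_inr, dotProduct]; fun_prop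

theorem appendDot_preimage_zero (w : ι → ℝ) : appendDot w ⁻¹' {0} = {0} := by
  ext x
  simp only [Set.mem_preimage, Set.mem_singleton_iff]
  refine ⟨fun h => funext fun i => congrFun h (Sum.inl i), ?_⟩
  rintro rfl
  ext (i | i) <;> simp [appendDot]

theorem sum_sq_appendDot_le (w x : ι → ℝ) :
    ∑ i, appendDot w x i ^ 2 ≤ (1 + ∑ j, w j ^ 2) * ∑ i, x i ^ 2 := by
  have hcs : (w ⬝ᵥ x) ^ 2 ≤ (∑ j, w j ^ 2) * ∑ i, x i ^ 2 :=
    Finset.sum_mul_sq_le_sq_mul_sq _ _ _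
  simp only [Fintype.sum_sum_type, appendDot, Sum.elim_inl, Sum.elim_inr, Finset.univ_unique,
    Finset.sum_singleton]
  linarith

theorem lintegral_sum_sq_map_appendDot_ne_top {K : Measure (ι → ℝ)}
    (hK2 : ∫⁻ x, ENNReal.ofReal (∑ i, x i ^ 2) ∂K ≠ ⊤) (w : ι → ℝ) :
    ∫⁻ y, ENNReal.ofReal (∑ i, y i ^ 2) ∂K.map (appendDot w) ≠ ⊤ := by
  rw [lintegral_map (by fun_prop) (measurable_appendDot w)]
  refine ne_top_of_le_ne_top
    (ENNReal.mul_ne_top (ENNReal.ofReal_ne_top (r := 1 + ∑ j, w j ^ 2)) hK2) ?_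
  rw [← lintegral_const_mul' _ _ ENNReal.ofReal_ne_top]
  refine lintegral_mono fun x => ?_
  rw [← ENNReal.ofReal_mul (by positivity)]
  exact ENNReal.ofReal_le_ofReal (sum_sq_appendDot_le w x)

theorem integrable_mul_apply_of_lintegral_sum_sq_ne_top {K : Measure (ι → ℝ)}
    (hK2 : ∫⁻ x, ENNReal.ofReal (∑ i, x i ^ 2) ∂K ≠ ⊤) (i j : ι) :
    Integrable (fun x => x i * x j) K := by
  have hsum : Integrable (fun x : ι → ℝ => ∑ k, x k ^ 2) K := by
    refine ⟨Measurable.aestronglyMeasurable (by fun_prop), ?_⟩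
    rw [hasFiniteIntegral_iff_ofReal (.of_forall fun x => by positivity)]
    exact hK2.lt_top
  have hL2 : ∀ k, MemLp (fun x : ι → ℝ => x k) 2 K := fun k => by
    refine (memLp_two_iff_integrable_sq (measurable_pi_apply k).aestronglyMeasurable).2
      (hsum.mono' ((measurable_pi_apply k).pow_const 2).aestronglyMeasurable ?_)
    refine .of_forall fun x => ?_
    rw [Real.norm_of_nonneg (sq_nonneg _)]
    exact Finset.single_le_sum (fun k _ => sq_nonneg (x k)) (Finset.mem_univ k)
  exact (hL2 i).integrable_mul (hL2 j)

theorem integral_mul_dotProduct {K : Measure (ι → ℝ)}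
    (hK2 : ∫⁻ x, ENNReal.ofReal (∑ i, x i ^ 2) ∂K ≠ ⊤) {A : Matrix ι ι ℝ}
    (hA : ∀ i j, A i j = ∫ x, x i * x j ∂K) (w : ι → ℝ) (i : ι) :
    ∫ x, x i * (w ⬝ᵥ x) ∂K = (A *ᵥ w) i := calc
  ∫ x, x i * (w ⬝ᵥ x) ∂K = ∫ x, ∑ k, x i * x k * w k ∂K := by
        simp only [dotProduct, Finset.mul_sum, mul_comm (w _), mul_assoc]
  _ = ∑ k, (∫ x, x i * x k ∂K) * w k := by
        rw [integral_finsetSum _ fun k _ =>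
          (integrable_mul_apply_of_lintegral_sum_sq_ne_top hK2 i k).mul_const (w k)]
        simp only [integral_mul_const]
  _ = (A *ᵥ w) i := by simp only [mulVec, dotProduct, hA, mul_comm]

end SecondMoments

theorem hatMatrix_mulVec_eq_integral_map_appendDot {d : ℕ} {K : Measure (Fin d → ℝ)}
    (hK2 : ∫⁻ x, ENNReal.ofReal (∑ i, x i ^ 2) ∂K ≠ ⊤) {A : Matrix (Fin d) (Fin d) ℝ}
    (hA : ∀ i j, A i j = ∫ x, x i * x j ∂K) (w : Fin d → ℝ) (c : ℝ) :
    ∀ i j : Fin d ⊕ Unit, i.isLeft = true ∨ j.isLeft = true →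
      hatMatrix A (A *ᵥ w) c i j = ∫ y, y i * y j ∂K.map (appendDot w) := by
  have hmap : ∀ i j, ∫ y, y i * y j ∂K.map (appendDot w) =
      ∫ x, appendDot w x i * appendDot w x j ∂K := fun i j =>
    integral_map (measurable_appendDot w).aemeasurable (by fun_prop)
  rintro (i | i) (j | j) hij
  · rw [hmap]; exact hA i j
  · rw [hmap, hatMatrix, fromBlocks_apply₁₂, of_apply, ← integral_mul_dotProduct hK2 hA w i]
    rfl
  · rw [hmap, hatMatrix, fromBlocks_apply₂₁, of_apply, ← integral_mul_dotProduct hK2 hA w j]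
    simp only [appendDot, Sum.elim_inl, Sum.elim_inr, mul_comm]
  · simp at hij

/-- Given a measure `K` on `ℝ^d` with `K({0}) = 0` and finite second moments, and a
positive semidefinite `Â = [[A, b],[bᵀ, c]]` with `A_{ij} = ∫ x_i x_j K(dx)`, there exists a
measure `K̂` on `ℝ^{d+1}` (the pushforward of `K` under `x ↦ (x, ⟨A†b, x⟩)`) with
`K̂({0}) = 0`, finite second moments, compatible integrals, and matching mixed second
moments for all indices `(i,j)` with `i ≤ d` or `j ≤ d`. -/
theorem stmt13 {d : ℕ} (K : Measure (Fin d → ℝ))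
    (hK0 : K {0} = 0)
    (hK2 : ∫⁻ x, ENNReal.ofReal (∑ i, (x i) ^ 2) ∂K ≠ ⊤)
    (A : Matrix (Fin d) (Fin d) ℝ) (b : Fin d → ℝ) (c : ℝ)
    (hhat : (hatMatrix A b c).PosSemidef)
    (hA : ∀ i j : Fin d, A i j = ∫ x, x i * x j ∂K) :
    ∃ Khat : Measure ((Fin d ⊕ Unit) → ℝ),
      Khat {0} = 0 ∧
      (∫⁻ x, ENNReal.ofReal (∑ i, (x i) ^ 2) ∂Khat) ≠ ⊤ ∧
      (∀ f : ((Fin d ⊕ Unit) → ℝ) → ℝ≥0∞, Measurable f →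
        ∫⁻ x, f x ∂Khat =
          ∫⁻ x, f (Sum.elim x (fun _ => (moorePenrose A).mulVec b ⬝ᵥ x)) ∂K) ∧
      (∀ f : (Fin d → ℝ) → ℝ≥0∞, Measurable f →
        ∫⁻ x, f x ∂K = ∫⁻ x, f (fun i => x (Sum.inl i)) ∂Khat) ∧
      (∀ i j : Fin d ⊕ Unit, i.isLeft = true ∨ j.isLeft = true →
        hatMatrix A b c i j = ∫ x, x i * x j ∂Khat) := by
  have hAsymm : A.IsSymm := IsSymm.ext fun i j => by simp only [hA, mul_comm]
  set w := moorePenrose A *ᵥ b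
  have hAw : A *ᵥ w = b :=
    hAsymm.isMoorePenroseInverse_moorePenrose.mulVec_mulVec_of_dotProduct_ker_eq_zero hAsymm
      fun _ => dotProduct_eq_zero_of_posSemidef_hatMatrix hhat
  have hT := measurable_appendDot w
  refine ⟨K.map (appendDot w), ?_, lintegral_sum_sq_map_appendDot_ne_top hK2 w,
    fun f hf => lintegral_map hf hT,
    fun f hf => (lintegral_map (f := fun y => f fun i => y (Sum.inl i)) (by fun_prop) hT).symm, ?_⟩
  · rwa [Measure.map_apply hT (measurableSet_singleton 0), appendDot_preimage_zero]
  · rw [← hAw]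
    exact hatMatrix_mulVec_eq_integral_map_appendDot hK2 hA w c
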